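/- arXiv:1407.3153 — 2 statements merged into one kernel-verified Lean document; each statement's English description precedes it below -/
import Mathlib

section
/- Let ν be a probability measure on the configuration space Ω = {0,1}^ℤ that is invariant under the shift θ₁, and let c, ω : Ω → ℝ be bounded measurable functions satisfying the exclusion rule (c(η) = 0 whenever η(0) = η(1)) and the gradient condition c(η)(η(0) − η(1)) = ω(η) − ω(θ₁η). Then the mean current equals half the mean mobility: ∫ c(η)·η(0)·(1 − η(1)) dν(η) = (1/2) ∫ c(η)·(η(1) − η(0))² dν(η). -/
open MeasureTheory

/-- The shift `θ₁` on configurations: `(θ₁ η)(y) = η (1 + y)`. -/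
def shift1 (η : ℤ → ℝ) : ℤ → ℝ := fun y => η (1 + y)

lemma shift1_measurable : Measurable shift1 :=
  measurable_pi_lambda _ (fun y => measurable_pi_apply (1 + y))

/-- **Mean current equals half the mean mobility.**
Let `ν` be a shift-invariant probability measure on `Ω = {0,1}^ℤ` and let
`c`, `ω` be bounded measurable functions satisfying the exclusion rule and the
gradient condition.  Then `∫ c(η)·η(0)·(1 − η(1)) dν = (1/2) ∫ c(η)·(η(1) − η(0))² dν`. -/
theorem mean_current_eq_half_mean_mobility
    (ν : Measure (ℤ → ℝ)) [IsProbabilityMeasure ν]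
    (hsupp : ∀ᵐ η ∂ν, ∀ x, η x = 0 ∨ η x = 1)
    (hinv : ν.map shift1 = ν)
    (c ω : (ℤ → ℝ) → ℝ)
    (hcmeas : Measurable c) (hωmeas : Measurable ω)
    (hcbdd : ∃ M : ℝ, ∀ η, |c η| ≤ M) (hωbdd : ∃ M : ℝ, ∀ η, |ω η| ≤ M)
    (hexc : ∀ η : ℤ → ℝ, (∀ x, η x = 0 ∨ η x = 1) → η 0 = η 1 → c η = 0)
    (hgrad : ∀ η : ℤ → ℝ, (∀ x, η x = 0 ∨ η x = 1) →
      c η * (η 0 - η 1) = ω η - ω (shift1 η)) :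
    ∫ η, c η * (η 0 * (1 - η 1)) ∂ν
      = (1 / 2) * ∫ η, c η * (η 1 - η 0) ^ 2 ∂ν := by
  obtain ⟨M, hM⟩ := hcbdd
  obtain ⟨N, hN⟩ := hωbdd
  -- measurability facts
  have hmob_meas : Measurable (fun η : ℤ → ℝ => c η * (η 1 - η 0) ^ 2) :=
    hcmeas.mul (((measurable_pi_apply 1).sub (measurable_pi_apply 0)).pow measurable_const)
  have hωs_meas : Measurable (fun η => ω (shift1 η)) := hωmeas.comp shift1_measurable
  -- integrability
  have hmob_int : Integrable (fun η : ℤ → ℝ => c η * (η 1 - η 0) ^ 2) ν := by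
    refine ⟨hmob_meas.aestronglyMeasurable, ?_⟩
    apply (hasFiniteIntegral_iff_norm _).2
    calc ∫⁻ η, ENNReal.ofReal ‖c η * (η 1 - η 0) ^ 2‖ ∂ν
        ≤ ∫⁻ _, ENNReal.ofReal (|M|) ∂ν := by
          refine lintegral_mono_ae ?_
          filter_upwards [hsupp] with η hη
          apply ENNReal.ofReal_le_ofReal
          rw [Real.norm_eq_abs, abs_mul]
          have h1 : |(η 1 - η 0) ^ 2| ≤ 1 := by
            rcases hη 0 with h0 | h0 <;> rcases hη 1 with h1 | h1 <;>
              simp [h0, h1]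
          calc |c η| * |(η 1 - η 0) ^ 2| ≤ |c η| * 1 :=
                mul_le_mul_of_nonneg_left h1 (abs_nonneg _)
            _ = |c η| := mul_one _
            _ ≤ |M| := (hM η).trans (le_abs_self M)
      _ < ⊤ := by simp [lintegral_const]
  have hω_int : Integrable ω ν := by
    refine ⟨hωmeas.aestronglyMeasurable, ?_⟩
    apply (hasFiniteIntegral_iff_norm _).2
    calc ∫⁻ η, ENNReal.ofReal ‖ω η‖ ∂ν
        ≤ ∫⁻ _, ENNReal.ofReal (|N|) ∂ν := by
          refine lintegral_mono fun η => ENNReal.ofReal_le_ofReal ?_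
          rw [Real.norm_eq_abs]
          exact (hN η).trans (le_abs_self N)
      _ < ⊤ := by simp [lintegral_const]
  have hωs_int : Integrable (fun η => ω (shift1 η)) ν := by
    refine ⟨hωs_meas.aestronglyMeasurable, ?_⟩
    apply (hasFiniteIntegral_iff_norm _).2
    calc ∫⁻ η, ENNReal.ofReal ‖ω (shift1 η)‖ ∂ν
        ≤ ∫⁻ _, ENNReal.ofReal (|N|) ∂ν := by
          refine lintegral_mono fun η => ENNReal.ofReal_le_ofReal ?_
          rw [Real.norm_eq_abs]
          exact (hN _).trans (le_abs_self N)
      _ < ⊤ := by simp [lintegral_const]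
  -- ∫ ω ∘ shift1 = ∫ ω
  have hshift_int : ∫ η, ω (shift1 η) ∂ν = ∫ η, ω η ∂ν := by
    rw [← integral_map shift1_measurable.aemeasurable hωmeas.aestronglyMeasurable, hinv]
  -- pointwise a.e. identity
  have hae : (fun η : ℤ → ℝ => c η * (η 0 * (1 - η 1)))
      =ᵐ[ν] fun η => (1/2) * (c η * (η 1 - η 0) ^ 2) + (1/2) * (ω η - ω (shift1 η)) := by
    filter_upwards [hsupp] with η hη
    have hg := hgrad η hη
    rw [← hg]
    rcases hη 0 with h0 | h0 <;> rcases hη 1 with h1 | h1 <;>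
      simp [h0, h1] <;> ring
  have hω_int' : Integrable (fun η => ω η) ν := hω_int
  have hdiff : Integrable (fun η => ω η - ω (shift1 η)) ν := hω_int'.sub hωs_int
  rw [integral_congr_ae hae]
  rw [integral_add (hmob_int.const_mul _) (hdiff.const_mul _)]
  rw [integral_const_mul, integral_const_mul, integral_sub hω_int' hωs_int, hshift_int]
  ring
end

section
/- Weighted mean ergodic theorem for the noise variance. Let ν be a probability measure on the configuration space Ω = {0,1}^ℤ that is invariant and ergodic under the shift T given by (Tη)(y) = η(y+1), let f ∈ L²(ν), and let G : ℝ → ℝ be continuous with compact support. For ε > 0 define Z_ε(η) = ε·Σ_{x ∈ ℤ} f(T^x η)·G(εx). Then Z_ε converges in L²(ν), as ε → 0⁺, to the constant (∫ f dν)·(∫_ℝ G(u) du). -/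
/-!
Let `U n` be the Koopman operator `g ↦ g ∘ Tⁿ` on `L²(ν)`, so that `Z_ε = ∑ₙ w_ε(n) Uₙ f` with
the Riemann weights `w_ε(n) = ε G(εn)`. By ergodicity the `U 1`-invariant vectors are the
constants, so `f - ∫ f` is orthogonal to them; for a contraction the orthogonal complement of the
fixed vectors is the closure of the range of `U 1 - 1`. On a coboundary `U 1 g - g`, summation by
parts turns the weighted sum into `∑ₙ (w_ε(n - 1) - w_ε(n)) Uₙ g`, whose norm is at most the total
variation of the weights times `‖g‖`, which is `o(1)` by uniform continuity of `G`. As the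
`ℓ¹`-norms of the weights stay bounded, this passes to the closure. The constant part contributes
`(∑ₙ w_ε(n)) ∫ f`, and these Riemann sums converge to `∫ G`.
-/

open MeasureTheory Filter Topology

lemma tendsto_zero_of_forall_eventually_abs_le_mul {ι : Type*} {l : Filter ι} {a : ι → ℝ}
    {C : ℝ} (hC : 0 < C) (h : ∀ δ > 0, ∀ᶠ i in l, |a i| ≤ C * δ) : Tendsto a l (𝓝 0) := by
  rw [Metric.nhds_basis_closedBall.tendsto_right_iff]
  intro δ hδ
  filter_upwards [h (δ / C) (div_pos hδ hC)] with i hi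
  rw [Metric.mem_closedBall, Real.dist_eq, sub_zero]
  rwa [mul_div_cancel₀ _ hC.ne'] at hi

section RiemannSums

lemma tsum_mul_abs_le_of_eq_zero_outside {φ : ℤ → ℝ} {R B ε : ℝ} (hR : 0 ≤ R) (hε : 0 < ε)
    (hφ : ∀ n : ℤ, R ≤ |ε * n| → φ n = 0) (hB : ∀ n, |φ n| ≤ B) :
    ∑' n, ε * |φ n| ≤ (2 * R + ε) * B := by
  set N := ⌊R / ε⌋₊
  have hNε : N * ε ≤ R := (le_div_iff₀ hε).1 (Nat.floor_le (by positivity))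
  have hvanish : ∀ n ∉ Finset.Icc (-(N : ℤ)) N, ε * |φ n| = 0 := by
    intro n hn
    have hn' : (N : ℤ) + 1 ≤ |n| := by
      rw [Finset.mem_Icc, not_and_or, not_le, not_le] at hn
      rcases abs_cases n with ⟨h, h'⟩ | ⟨h, h'⟩ <;> omega
    have hRN : R < (N + 1) * ε := (div_lt_iff₀ hε).1 (Nat.lt_floor_add_one _)
    have : ((N : ℤ) + 1 : ℝ) ≤ |(n : ℝ)| := by exact_mod_cast hn'
    rw [hφ n (by rw [abs_mul, abs_of_pos hε]; push_cast at this; nlinarith), abs_zero, mul_zero]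
  have hcard : (Finset.Icc (-(N : ℤ)) N).card = 2 * N + 1 := by
    rw [Int.card_Icc]; omega
  have hB0 : 0 ≤ B := (abs_nonneg _).trans (hB 0)
  calc ∑' n, ε * |φ n| = ∑ n ∈ Finset.Icc (-(N : ℤ)) N, ε * |φ n| := tsum_eq_sum hvanish
    _ ≤ (Finset.Icc (-(N : ℤ)) N).card • (ε * B) :=
        Finset.sum_le_card_nsmul _ _ _ fun n _ => mul_le_mul_of_nonneg_left (hB n) hε.le
    _ = (2 * (N * ε) + ε) * B := by rw [hcard, nsmul_eq_mul]; push_cast; ring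
    _ ≤ (2 * R + ε) * B := by gcongr

def riemannWeight (G : ℝ → ℝ) (ε : ℝ) (n : ℤ) : ℝ := ε * G (ε * n)

variable {G : ℝ → ℝ}

lemma hasFiniteSupport_riemannWeight (hG : HasCompactSupport G) (ε : ℝ) :
    (riemannWeight G ε).HasFiniteSupport := by
  unfold Function.HasFiniteSupport
  rcases eq_or_ne ε 0 with rfl | hε
  · convert Set.finite_empty
    ext n
    simp [riemannWeight]
  have hcast : Tendsto (fun n : ℤ => ε * n) cofinite (cocompact ℝ) :=
    (Homeomorph.mulLeft₀ ε hε).isClosedEmbedding.tendsto_cocompact.comp Int.tendsto_coe_cofinite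
  refine (Filter.eventually_cofinite.1 (hcast.eventually hG.isCompact.compl_mem_cocompact)).subset
    fun n hn h => hn ?_
  simp [riemannWeight, image_eq_zero_of_notMem_tsupport h]

lemma eq_zero_of_add_one_le_abs {R : ℝ} (hRG : ∀ u, R ≤ |u| → G u = 0) {u t : ℝ} (ht : |t| ≤ 1)
    (hu : R + 1 ≤ |u|) : G (u + t) = 0 := by
  have := abs_add_le (u + t) (-t)
  rw [add_neg_cancel_right, abs_neg] at this
  exact hRG _ (by linarith)

lemma exists_eventually_tsum_abs_riemannWeight_le (hGc : Continuous G)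
    (hG : HasCompactSupport G) : ∃ C, ∀ᶠ ε in 𝓝[>] (0 : ℝ), ∑' n, |riemannWeight G ε n| ≤ C := by
  obtain ⟨R, hR, hRG⟩ := hG.exists_pos_le_norm
  obtain ⟨B, hB⟩ := hGc.bounded_above_of_compact_support hG
  refine ⟨(2 * R + 1) * B, ?_⟩
  filter_upwards [Ioo_mem_nhdsGT one_pos] with ε ⟨hε0, hε1⟩
  have hB0 : 0 ≤ B := (norm_nonneg _).trans (hB 0)
  calc ∑' n, |riemannWeight G ε n| = ∑' n : ℤ, ε * |G (ε * n)| := by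
        simp_rw [riemannWeight, abs_mul, abs_of_pos hε0]
    _ ≤ (2 * R + ε) * B :=
        tsum_mul_abs_le_of_eq_zero_outside hR.le hε0 (fun n hn => hRG _ hn) (fun n => hB _)
    _ ≤ (2 * R + 1) * B := by gcongr

lemma tendsto_tsum_abs_sub_riemannWeight (hGc : Continuous G) (hG : HasCompactSupport G) :
    Tendsto (fun ε => ∑' n : ℤ, |riemannWeight G ε (n - 1) - riemannWeight G ε n|)
      (𝓝[>] 0) (𝓝 0) := by
  obtain ⟨R, hR, hRG⟩ := hG.exists_pos_le_norm
  simp only [Real.norm_eq_abs] at hRG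
  refine tendsto_zero_of_forall_eventually_abs_le_mul (C := 2 * (R + 1) + 1) (by positivity)
    fun δ hδ => ?_
  obtain ⟨η, hη, hGη⟩ :=
    Metric.uniformContinuous_iff.1 (hG.uniformContinuous_of_continuous hGc) δ hδ
  filter_upwards [Ioo_mem_nhdsGT (lt_min hη one_pos)] with ε ⟨hε0, hε⟩
  have hεη : ε < η := hε.trans_le (min_le_left _ _)
  have hε1 : ε ≤ 1 := (hε.trans_le (min_le_right _ _)).le
  have hε1' : |-ε| ≤ 1 := by rwa [abs_neg, abs_of_pos hε0]
  have hterm : ∀ n : ℤ, |riemannWeight G ε (n - 1) - riemannWeight G ε n|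
      = ε * |G (ε * n + -ε) - G (ε * n)| := fun n => by
    rw [riemannWeight, riemannWeight, ← mul_sub, abs_mul, abs_of_pos hε0]
    push_cast
    ring_nf
  rw [abs_of_nonneg (tsum_nonneg fun _ => abs_nonneg _), tsum_congr hterm]
  calc _ ≤ (2 * (R + 1) + ε) * δ := by
        refine tsum_mul_abs_le_of_eq_zero_outside (by positivity) hε0 (fun n hn => ?_)
          (fun n => (hGη ?_).le)
        · rw [eq_zero_of_add_one_le_abs hRG hε1' hn, hRG _ (by linarith), sub_zero]
        · rwa [Real.dist_eq, add_sub_cancel_left, abs_neg, abs_of_pos hε0]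
    _ ≤ (2 * (R + 1) + 1) * δ := by gcongr

lemma intervalIntegral_sub_comp_add_mul_eq_zero {R : ℝ} (hRG : ∀ u, R ≤ |u| → G u = 0)
    {ε u : ℝ} (hε0 : 0 ≤ ε) (hε1 : ε ≤ 1) (hu : R + 1 ≤ |u|) :
    ∫ s in (0 : ℝ)..1, (G u - G (u + ε * s)) = 0 := by
  refine (intervalIntegral.integral_congr fun s hs => ?_).trans intervalIntegral.integral_zero
  rw [Set.uIcc_of_le zero_le_one] at hs
  have hεs : |ε * s| ≤ 1 := by
    rw [abs_mul, abs_of_nonneg hε0, abs_of_nonneg hs.1]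
    nlinarith [hs.2]
  simp only [hRG u (by linarith), eq_zero_of_add_one_le_abs hRG hεs hu, sub_zero]

lemma abs_intervalIntegral_sub_comp_add_mul_le {δ η ε : ℝ}
    (hGη : ∀ ⦃a b⦄, dist a b < η → dist (G a) (G b) < δ) (hε0 : 0 < ε) (hεη : ε < η) (u : ℝ) :
    |∫ s in (0 : ℝ)..1, (G u - G (u + ε * s))| ≤ δ := by
  simpa using intervalIntegral.norm_integral_le_of_norm_le_const (a := 0) (b := 1)
    (C := δ) (f := fun s => G u - G (u + ε * s)) fun s hs => by
      rw [Set.uIoc_of_le zero_le_one] at hs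
      refine (hGη ?_).le
      rw [Real.dist_eq, sub_add_cancel_left, abs_neg, abs_mul, abs_of_pos hε0, abs_of_pos hs.1]
      nlinarith [hs.2]

lemma hasSum_mul_intervalIntegral_comp_add (hGc : Continuous G) (hG : HasCompactSupport G)
    {ε : ℝ} (hε : 0 < ε) :
    HasSum (fun n : ℤ => ε * ∫ s in (0 : ℝ)..1, G (ε * n + ε * s)) (∫ u, G u) := by
  have hint : Integrable (fun t => ε * G (ε * t)) :=
    ((hGc.integrable_of_hasCompactSupport hG).comp_mul_left' hε.ne').const_mul ε
  have hsum := hint.hasSum_intervalIntegral_comp_add_int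
  rw [integral_const_mul, Measure.integral_comp_mul_left, smul_eq_mul, abs_inv, abs_of_pos hε,
    mul_inv_cancel_left₀ hε.ne'] at hsum
  have hcells : (fun n : ℤ => ε * ∫ s in (0 : ℝ)..1, G (ε * n + ε * s))
      = fun n : ℤ => ∫ s in (0 : ℝ)..1, ε * G (ε * (s + n)) := by
    funext n
    rw [← intervalIntegral.integral_const_mul]
    congr 1 with s
    ring_nf
  rwa [hcells]

lemma tendsto_tsum_riemannWeight (hGc : Continuous G) (hG : HasCompactSupport G) :
    Tendsto (fun ε => ∑' n, riemannWeight G ε n) (𝓝[>] 0) (𝓝 (∫ u, G u)) := by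
  obtain ⟨R, hR, hRG⟩ := hG.exists_pos_le_norm
  simp only [Real.norm_eq_abs] at hRG
  rw [← tendsto_sub_nhds_zero_iff]
  refine tendsto_zero_of_forall_eventually_abs_le_mul (C := 2 * (R + 1) + 1) (by positivity)
    fun δ hδ => ?_
  obtain ⟨η, hη, hGη⟩ :=
    Metric.uniformContinuous_iff.1 (hG.uniformContinuous_of_continuous hGc) δ hδ
  filter_upwards [Ioo_mem_nhdsGT (lt_min hη one_pos)] with ε ⟨hε0, hε⟩
  have hεη : ε < η := hε.trans_le (min_le_left _ _)
  have hε1 : ε ≤ 1 := (hε.trans_le (min_le_right _ _)).le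
  have hcell := hasSum_mul_intervalIntegral_comp_add hGc hG hε0
  set φ : ℤ → ℝ := fun n => ∫ s in (0 : ℝ)..1, (G (ε * n) - G (ε * n + ε * s))
  have hdiff : ∀ n : ℤ, riemannWeight G ε n - ε * ∫ s in (0 : ℝ)..1, G (ε * n + ε * s)
      = ε * φ n := fun n => by
    have hGs : Continuous fun s : ℝ => G (ε * n + ε * s) := by fun_prop
    simp only [φ]
    rw [intervalIntegral.integral_sub intervalIntegrable_const (hGs.intervalIntegrable _ _),
      intervalIntegral.integral_const]
    simp [riemannWeight, mul_sub]
  have hw : Summable (riemannWeight G ε) :=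
    summable_of_hasFiniteSupport (hasFiniteSupport_riemannWeight hG ε)
  rw [← hcell.tsum_eq, ← hw.tsum_sub hcell.summable]
  calc _ ≤ ∑' n, |riemannWeight G ε n - ε * ∫ s in (0 : ℝ)..1, G (ε * n + ε * s)| := by
        simpa only [Real.norm_eq_abs] using norm_tsum_le_tsum_norm (hw.sub hcell.summable).norm
    _ = ∑' n : ℤ, ε * |φ n| := by simp_rw [hdiff, abs_mul, abs_of_pos hε0]
    _ ≤ (2 * (R + 1) + ε) * δ := tsum_mul_abs_le_of_eq_zero_outside (by positivity) hε0
        (fun _ hn => intervalIntegral_sub_comp_add_mul_eq_zero hRG hε0.le hε1 hn)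
        (fun _ => abs_intervalIntegral_sub_comp_add_mul_le hGη hε0 hεη _)
    _ ≤ (2 * (R + 1) + 1) * δ := by gcongr

end RiemannSums

section WeightedSums

variable {E : Type*} [NormedAddCommGroup E] [NormedSpace ℝ E] (U : ℤ → E →L[ℝ] E) {c : ℤ → ℝ}

lemma tsum_smul_map_add (hc : c.HasFiniteSupport) (u v : E) :
    ∑' n, c n • U n (u + v) = ∑' n, c n • U n u + ∑' n, c n • U n v := by
  rw [← (summable_of_hasFiniteSupport (hc.fun_smul_left _)).tsum_add
    (summable_of_hasFiniteSupport (hc.fun_smul_left _))]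
  simp [smul_add]

lemma norm_tsum_smul_le (hU : ∀ n v, ‖U n v‖ ≤ ‖v‖) (hc : c.HasFiniteSupport) (v : E) :
    ‖∑' n, c n • U n v‖ ≤ (∑' n, |c n|) * ‖v‖ := by
  have habs : (fun n => |c n|).HasFiniteSupport := hc.fun_comp abs_zero
  have hnorm : (fun n => ‖c n • U n v‖).HasFiniteSupport :=
    (hc.fun_smul_left fun n => U n v).fun_comp norm_zero
  calc ‖∑' n, c n • U n v‖ ≤ ∑' n, ‖c n • U n v‖ :=
        norm_tsum_le_tsum_norm (summable_of_hasFiniteSupport hnorm)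
    _ ≤ ∑' n, |c n| * ‖v‖ := by
        refine (summable_of_hasFiniteSupport hnorm).tsum_le_tsum (fun n => ?_)
          ((summable_of_hasFiniteSupport habs).mul_right _)
        rw [norm_smul, Real.norm_eq_abs]
        exact mul_le_mul_of_nonneg_left (hU n v) (abs_nonneg _)
    _ = (∑' n, |c n|) * ‖v‖ := tsum_mul_right

lemma tsum_smul_apply_sub_eq (hU1 : ∀ n v, U n (U 1 v) = U (n + 1) v)
    (hc : c.HasFiniteSupport) (v : E) :
    ∑' n, c n • U n (U 1 v - v) = ∑' n, (c (n - 1) - c n) • U n v := by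
  have hc' : (fun n => c (n - 1)).HasFiniteSupport := hc.fun_comp_of_injective sub_left_injective
  have hs {d : ℤ → ℝ} (hd : d.HasFiniteSupport) (w : ℤ → E) : Summable fun n => d n • w n :=
    summable_of_hasFiniteSupport (hd.fun_smul_left w)
  have hshift : ∑' n, c n • U (n + 1) v = ∑' n, c (n - 1) • U n v := by
    rw [← (Equiv.subRight (1 : ℤ)).tsum_eq]
    simp
  simp_rw [map_sub, smul_sub, hU1, sub_smul]
  rw [(hs hc _).tsum_sub (hs hc _), (hs hc' _).tsum_sub (hs hc _), hshift]

variable {ι : Type*} {l : Filter ι} {w : ι → ℤ → ℝ}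

theorem tendsto_tsum_smul_of_mem_closure_range
    (hU : ∀ n v, ‖U n v‖ ≤ ‖v‖) (hU1 : ∀ n v, U n (U 1 v) = U (n + 1) v)
    (hw : ∀ i, (w i).HasFiniteSupport) {C : ℝ} (hC : ∀ᶠ i in l, ∑' n, |w i n| ≤ C)
    (hvar : Tendsto (fun i => ∑' n, |w i (n - 1) - w i n|) l (𝓝 0))
    {v : E} (hv : v ∈ (LinearMap.range ((U 1 : E →ₗ[ℝ] E) - 1)).topologicalClosure) :
    Tendsto (fun i => ∑' n, w i n • U n v) l (𝓝 0) := by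
  rw [tendsto_zero_iff_norm_tendsto_zero]
  refine tendsto_zero_of_forall_eventually_abs_le_mul (C := |C| + 1) (by positivity)
    fun δ hδ => ?_
  rw [← SetLike.mem_coe, Submodule.topologicalClosure_coe] at hv
  obtain ⟨_, ⟨g, rfl⟩, hvg⟩ := Metric.mem_closure_iff.1 hv δ hδ
  replace hvg : ‖v - (U 1 g - g)‖ ≤ δ := by simpa [dist_eq_norm] using hvg.le
  have hcob : ∀ i, ‖∑' n, w i n • U n (U 1 g - g)‖ ≤ (∑' n, |w i (n - 1) - w i n|) * ‖g‖ := by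
    intro i
    have hd : (fun n => w i (n - 1) - w i n).HasFiniteSupport :=
      ((hw i).fun_comp_of_injective sub_left_injective).sub (hw i)
    simpa [← tsum_smul_apply_sub_eq U hU1 (hw i)] using norm_tsum_smul_le U hU hd g
  filter_upwards [hC, (hvar.mul_const ‖g‖).eventually (Iic_mem_nhds (by simpa using hδ))]
    with i hCi hvari
  rw [abs_of_nonneg (norm_nonneg _), ← sub_add_cancel v (U 1 g - g), tsum_smul_map_add U (hw i)]
  calc _ ≤ (∑' n, |w i n|) * ‖v - (U 1 g - g)‖ + (∑' n, |w i (n - 1) - w i n|) * ‖g‖ :=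
        (norm_add_le _ _).trans (add_le_add (norm_tsum_smul_le U hU (hw i) _) (hcob i))
    _ ≤ |C| * δ + δ := add_le_add
        (mul_le_mul (hCi.trans (le_abs_self C)) hvg (norm_nonneg _) (abs_nonneg _)) hvari
    _ = (|C| + 1) * δ := by ring

theorem tendsto_tsum_smul_of_sub_mem_closure_range
    (hU : ∀ n v, ‖U n v‖ ≤ ‖v‖) (hU1 : ∀ n v, U n (U 1 v) = U (n + 1) v)
    (hw : ∀ i, (w i).HasFiniteSupport) {C : ℝ} (hC : ∀ᶠ i in l, ∑' n, |w i n| ≤ C)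
    (hvar : Tendsto (fun i => ∑' n, |w i (n - 1) - w i n|) l (𝓝 0))
    {k v : E} (hk : ∀ n, U n k = k)
    (hv : v - k ∈ (LinearMap.range ((U 1 : E →ₗ[ℝ] E) - 1)).topologicalClosure)
    {a : ℝ} (ha : Tendsto (fun i => ∑' n, w i n) l (𝓝 a)) :
    Tendsto (fun i => ∑' n, w i n • U n v) l (𝓝 (a • k)) := by
  have hsplit : ∀ i, ∑' n, w i n • U n v = ∑' n, w i n • U n (v - k) + (∑' n, w i n) • k := by
    intro i
    rw [← sub_add_cancel v k, tsum_smul_map_add U (hw i), add_sub_cancel_right,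
      ← (summable_of_hasFiniteSupport (hw i)).tsum_smul_const]
    simp [hk]
  simpa [hsplit] using
    (tendsto_tsum_smul_of_mem_closure_range U hU hU1 hw hC hvar hv).add (ha.smul_const k)

end WeightedSums

section Contraction

variable {𝕜 E : Type*} [RCLike 𝕜] [NormedAddCommGroup E] [InnerProductSpace 𝕜 E] [CompleteSpace E]

theorem ContinuousLinearMap.orthogonal_ker_sub_one_le_closure_range (f : E →L[𝕜] E)
    (hf : ‖f‖ ≤ 1) :
    (LinearMap.ker ((f : E →ₗ[𝕜] E) - 1))ᗮ
      ≤ (LinearMap.range ((f : E →ₗ[𝕜] E) - 1)).topologicalClosure := by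
  rw [← Submodule.orthogonal_orthogonal_eq_closure]
  refine Submodule.orthogonal_le fun x hx => ?_
  rw [LinearMap.mem_ker, LinearMap.sub_apply, sub_eq_zero]
  -- `x ⊥ range (f - 1)` gives `⟪f x, x⟫ = ‖x‖²`, which forces `f x = x` as `‖f x‖ ≤ ‖x‖`
  have hinner : ∀ y, inner 𝕜 (f y) x = inner 𝕜 y x := by
    simpa [Submodule.mem_orthogonal, inner_sub_left, sub_eq_zero] using hx
  refine eq_of_norm_le_re_inner_eq_norm_sq (𝕜 := 𝕜) ?_ ?_
  · simpa using f.le_of_opNorm_le hf x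
  · simp [hinner]

end Contraction

section Shift

variable {α : Type*}

def shift (n : ℤ) (η : ℤ → α) : ℤ → α := fun y => η (y + n)

lemma shift_shift (m n : ℤ) (η : ℤ → α) : shift m (shift n η) = shift (m + n) η := by
  funext y
  simp [shift, add_assoc]

lemma shift_zero : shift (α := α) 0 = id := by
  funext η y
  simp [shift]

variable [MeasurableSpace α] {μ : Measure (ℤ → α)}

lemma measurable_shift (n : ℤ) : Measurable (shift (α := α) n) :=
  measurable_pi_lambda _ fun _ => measurable_pi_apply _

lemma measurePreserving_shift (h : MeasurePreserving (shift 1) μ μ) (n : ℤ) :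
    MeasurePreserving (shift n) μ μ := by
  have hinv : MeasurePreserving (shift (-1)) μ μ := by
    have hid : shift (α := α) (-1) ∘ shift 1 = id := by
      funext η
      simp [shift_shift, shift_zero]
    have := (hid ▸ MeasurePreserving.id μ).map_of_comp (measurable_shift _) h.measurable
    rwa [h.map_eq] at this
  induction n using Int.induction_on with
  | zero => simpa [shift_zero] using MeasurePreserving.id μ
  | succ n ih =>
    have : shift (α := α) (n + 1) = shift n ∘ shift 1 := funext fun η => (shift_shift _ _ η).symm
    exact this ▸ ih.comp h
  | pred n ih =>
    have : shift (α := α) (-n - 1) = shift (-n) ∘ shift (-1) :=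
      funext fun η => (shift_shift _ _ η).symm
    exact this ▸ ih.comp hinv

noncomputable def koopman (h : MeasurePreserving (shift 1) μ μ) (n : ℤ) :
    Lp ℝ 2 μ →L[ℝ] Lp ℝ 2 μ :=
  (Lp.compMeasurePreservingₗᵢ ℝ (shift n) (measurePreserving_shift h n)).toContinuousLinearMap

variable (h : MeasurePreserving (shift 1) μ μ)

lemma koopman_ae_eq (n : ℤ) (g : Lp ℝ 2 μ) : koopman h n g =ᵐ[μ] g ∘ shift n :=
  Lp.coeFn_compMeasurePreserving _ _

lemma norm_koopman (n : ℤ) (g : Lp ℝ 2 μ) : ‖koopman h n g‖ = ‖g‖ :=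
  Lp.norm_compMeasurePreserving _ _

lemma koopman_koopman_one (n : ℤ) (g : Lp ℝ 2 μ) :
    koopman h n (koopman h 1 g) = koopman h (n + 1) g := by
  refine Lp.ext ((koopman_ae_eq h n _).trans ?_)
  refine ((measurePreserving_shift h n).quasiMeasurePreserving.ae_eq_comp
    (koopman_ae_eq h 1 g)).trans ?_
  rw [Function.comp_assoc, show shift 1 ∘ shift n = shift (α := α) (n + 1) from
    funext fun η => (shift_shift _ _ η).trans (by rw [add_comm])]
  exact (koopman_ae_eq h (n + 1) g).symm

lemma koopman_const [IsFiniteMeasure μ] (n : ℤ) (a : ℝ) :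
    koopman h n (Lp.const 2 μ a) = Lp.const 2 μ a :=
  rfl

lemma koopman_toLp {f : (ℤ → α) → ℝ} (hf : MemLp f 2 μ) (n : ℤ) :
    koopman h n (hf.toLp f) = (hf.comp_measurePreserving (measurePreserving_shift h n)).toLp _ :=
  rfl

lemma tsum_smul_koopman_toLp_ae_eq {c : ℤ → ℝ} (hc : c.HasFiniteSupport) {f : (ℤ → α) → ℝ}
    (hf : MemLp f 2 μ) :
    ⇑(∑' n, c n • koopman h n (hf.toLp f)) =ᵐ[μ] fun η => ∑' n, c n * f (shift n η) := by
  obtain ⟨s, hs⟩ := Set.Finite.exists_finset_coe hc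
  rw [tsum_eq_sum' (s := s) fun n hn => hs ▸ fun hc0 => hn (by simp [hc0])]
  have hpt : ∀ η, ∑' n, c n * f (shift n η) = ∑ n ∈ s, c n * f (shift n η) := fun η =>
    tsum_eq_sum' fun n hn => hs ▸ fun hc0 => hn (by simp [hc0])
  simp_rw [hpt]
  have hterm : ∀ n ∈ s,
      ⇑(c n • koopman h n (hf.toLp f)) =ᵐ[μ] fun η => c n * f (shift n η) := fun n _ => by
    refine (Lp.coeFn_smul _ _).trans ?_
    rw [koopman_toLp]
    filter_upwards [MemLp.coeFn_toLp (hf.comp_measurePreserving (measurePreserving_shift h n))]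
      with η hη
    simp [hη]
  filter_upwards [Lp.coeFn_fun_finsetSum s fun n => c n • koopman h n (hf.toLp f),
    (eventually_all_finset _).2 hterm] with η hsum hη
  rw [hsum]
  exact Finset.sum_congr rfl hη

lemma eLpNorm_tsum_sub_const_eq_enorm [IsFiniteMeasure μ] {c : ℤ → ℝ} (hc : c.HasFiniteSupport)
    {f : (ℤ → α) → ℝ} (hf : MemLp f 2 μ) (a : ℝ) :
    eLpNorm (fun η => ∑' n, c n * f (shift n η) - a) 2 μ
      = ‖∑' n, c n • koopman h n (hf.toLp f) - Lp.const 2 μ a‖ₑ := by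
  rw [Lp.enorm_def]
  refine eLpNorm_congr_ae ?_
  filter_upwards [Lp.coeFn_sub (∑' n, c n • koopman h n (hf.toLp f)) (Lp.const 2 μ a),
    Lp.coeFn_const 2 μ a, tsum_smul_koopman_toLp_ae_eq h hc hf] with η h1 h2 h3
  rw [h1, Pi.sub_apply, h2, h3, Function.const_apply]

lemma toLp_sub_const_integral_mem_orthogonal [IsProbabilityMeasure μ]
    (hErg : Ergodic (shift 1) μ) {f : (ℤ → α) → ℝ} (hf : MemLp f 2 μ) :
    hf.toLp f - Lp.const 2 μ (∫ η, f η ∂μ) ∈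
      (LinearMap.ker ((koopman hErg.toMeasurePreserving 1 : Lp ℝ 2 μ →ₗ[ℝ] Lp ℝ 2 μ) - 1))ᗮ := by
  rw [Submodule.mem_orthogonal]
  intro k hk
  have hfix : koopman hErg.toMeasurePreserving 1 k = k := by simpa [sub_eq_zero] using hk
  obtain ⟨d, hd⟩ := hErg.ae_eq_const_of_ae_eq_comp_ae (Lp.aestronglyMeasurable k)
    ((koopman_ae_eq _ 1 k).symm.trans (by rw [hfix]))
  rw [L2.inner_def]
  calc ∫ η, inner ℝ (k η) ((hf.toLp f - Lp.const 2 μ (∫ η, f η ∂μ)) η) ∂μ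
      = ∫ η, d * (f η - ∫ η, f η ∂μ) ∂μ := by
        refine integral_congr_ae ?_
        filter_upwards [hd, Lp.coeFn_sub (hf.toLp f) (Lp.const 2 μ (∫ η, f η ∂μ)),
          hf.coeFn_toLp, Lp.coeFn_const 2 μ (∫ η, f η ∂μ)] with η h1 h2 h3 h4
        rw [h1, h2, Pi.sub_apply, h3, h4]
        simp [mul_comm]
    _ = 0 := by
        rw [integral_const_mul, integral_sub (hf.integrable one_le_two) (integrable_const _)]
        simp

end Shift

/-- **Weighted mean ergodic theorem for the noise variance.**
Let `ν` be a probability measure on `Ω = {0,1}^ℤ`, invariant and ergodic under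
the shift `T` given by `(Tη)(y) = η(y+1)`, let `f ∈ L²(ν)` and let `G : ℝ → ℝ`
be continuous with compact support.  Then, as `ε → 0⁺`, the field
`Z_ε(η) = ε·Σ_{x ∈ ℤ} f(T^x η)·G(εx)` converges in `L²(ν)` to the constant
`(∫ f dν)·(∫ G(u) du)`.  (Here `T^x η = (y ↦ η (y + x))` for `x ∈ ℤ`.) -/
theorem weighted_mean_ergodic_L2
    (ν : Measure (ℤ → Bool)) [IsProbabilityMeasure ν]
    (T : (ℤ → Bool) → (ℤ → Bool)) (hT : ∀ η y, T η y = η (y + 1))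
    (hErg : Ergodic T ν)
    (f : (ℤ → Bool) → ℝ) (hf : MemLp f 2 ν)
    (G : ℝ → ℝ) (hGcont : Continuous G) (hGsupp : HasCompactSupport G) :
    Tendsto
      (fun ε : ℝ => eLpNorm
        (fun η => (ε * ∑' x : ℤ, f (fun y => η (y + x)) * G (ε * x))
          - (∫ η, f η ∂ν) * (∫ u : ℝ, G u)) 2 ν)
      (𝓝[>] (0 : ℝ)) (𝓝 0) := by
  obtain rfl : T = shift 1 := funext fun η => funext (hT η)
  set U := koopman hErg.toMeasurePreserving
  have hU : ∀ n g, ‖U n g‖ ≤ ‖g‖ := fun n g => (norm_koopman _ n g).le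
  have hfluct := (U 1).orthogonal_ker_sub_one_le_closure_range
    (ContinuousLinearMap.opNorm_le_bound _ zero_le_one fun g => by simpa using hU 1 g)
    (toLp_sub_const_integral_mem_orthogonal hErg hf)
  obtain ⟨C, hC⟩ := exists_eventually_tsum_abs_riemannWeight_le hGcont hGsupp
  have hlim := tendsto_tsum_smul_of_sub_mem_closure_range U hU (koopman_koopman_one _)
    (hasFiniteSupport_riemannWeight hGsupp) hC (tendsto_tsum_abs_sub_riemannWeight hGcont hGsupp)
    (koopman_const _ · _) hfluct (tendsto_tsum_riemannWeight hGcont hGsupp)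
  have hconst : (∫ u, G u) • Lp.const 2 ν (∫ η, f η ∂ν)
      = Lp.const 2 ν ((∫ η, f η ∂ν) * ∫ u, G u) := by
    rw [mul_comm]
    exact ((Lp.constₗ 2 ν ℝ).map_smul _ _).symm
  have hZ : ∀ (ε : ℝ) η, ε * ∑' x : ℤ, f (fun y => η (y + x)) * G (ε * x)
      = ∑' n, riemannWeight G ε n * f (shift n η) := fun ε η => by
    rw [← tsum_mul_left]
    exact tsum_congr fun n => by unfold riemannWeight shift; ring
  simp_rw [hZ, fun ε => eLpNorm_tsum_sub_const_eq_enorm hErg.toMeasurePreserving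
    (hasFiniteSupport_riemannWeight hGsupp ε) hf]
  have hnorm := (continuous_enorm.tendsto _).comp
    (hlim.sub_const (Lp.const 2 ν ((∫ η, f η ∂ν) * ∫ u, G u)))
  rwa [hconst, sub_self, enorm_zero] at hnorm
end
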